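/- Let α > 0 and let a = (a_n)_{n≥1} be a finitely supported sequence of complex numbers. Define f(t) := ∑_{n=1}^∞ a_n n^{−1/2 − it} for t ∈ ℝ. Then (α/π) · ∫_{−∞}^{∞} |f(t)|² / (α² + t²) dt = ∑_{m=1}^∞ ∑_{n=1}^∞ a_m · conj(a_n) · (mn)^{α−1/2} / max(m,n)^{2α}. -/

import Mathlib

/-!
Expanding `|f(t)|²` reduces the integral to the numbers `∫ (n/m)^{it} / (α² + t²) dt`.
The kernel `α / (π (α² + t²))` is the Cauchy density, the Fourier transform of `e^{-2πα|x|}`,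
so Fourier inversion gives `∫ e^{ibt} / (α² + t²) dt = (π/α) e^{-α|b|}`. For `b = log (n/m)`
the weight `(mn)^{-1/2} e^{-α |log (n/m)|}` equals `(mn)^{α-1/2} / max(m,n)^{2α}`.
-/

open Complex MeasureTheory Set Filter Real ProbabilityTheory
open scoped FourierTransform NNReal ComplexConjugate

lemma integrable_exp_neg_mul_abs {c : ℝ} (hc : 0 < c) :
    Integrable fun x : ℝ => rexp (-(c * |x|)) := by
  rw [← integrableOn_univ, ← Iic_union_Ioi (a := (0 : ℝ))]
  refine IntegrableOn.union ?_ ?_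
  · refine (integrableOn_exp_mul_Iic hc 0).congr_fun (fun x hx => ?_) measurableSet_Iic
    rw [abs_of_nonpos hx, mul_neg, neg_neg]
  · refine (integrableOn_exp_mul_Ioi (neg_lt_zero.2 hc) 0).congr_fun (fun x hx => ?_)
      measurableSet_Ioi
    simp only [abs_of_pos (mem_Ioi.1 hx), neg_mul]

lemma fourier_exp_neg_two_pi_mul_abs {γ : ℝ≥0} (hγ : γ ≠ 0) (ξ : ℝ) :
    𝓕 (fun x : ℝ => (rexp (-(2 * π * γ * |x|)) : ℂ)) ξ = cauchyPDFReal 0 γ ξ := by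
  set a : ℂ := 2 * π * (γ - ξ * I)
  set b : ℂ := 2 * π * (γ + ξ * I)
  have ha : 0 < a.re := by simp [a]; positivity
  have hb : 0 < b.re := by simp [b]; positivity
  have hint : Integrable fun x : ℝ => 𝐞 (-inner ℝ x ξ) • (rexp (-(2 * π * γ * |x|)) : ℂ) :=
    (Real.fourierIntegral_convergent_iff ξ).2
    (integrable_exp_neg_mul_abs (c := 2 * π * γ) (by positivity)).ofReal
  have hIic : ∫ x in Iic (0 : ℝ), 𝐞 (-inner ℝ x ξ) • (rexp (-(2 * π * γ * |x|)) : ℂ)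
      = 1 / a := by
    refine (setIntegral_congr_fun measurableSet_Iic fun x hx => ?_).trans
      (by simpa using integral_exp_mul_complex_Iic ha 0)
    rw [abs_of_nonpos hx, Circle.smul_def, Real.fourierChar_apply, smul_eq_mul, ofReal_exp,
      ← Complex.exp_add]
    congr 1
    simp [a]
    ring
  have hIoi : ∫ x in Ioi (0 : ℝ), 𝐞 (-inner ℝ x ξ) • (rexp (-(2 * π * γ * |x|)) : ℂ)
      = 1 / b := by
    refine (setIntegral_congr_fun measurableSet_Ioi fun x hx => ?_).trans
      (by simpa using integral_exp_mul_complex_Ioi (a := -b) (by simpa using hb) 0)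
    rw [abs_of_pos (mem_Ioi.1 hx), Circle.smul_def, Real.fourierChar_apply, smul_eq_mul,
      ofReal_exp, ← Complex.exp_add]
    congr 1
    simp [b]
    ring
  have hsplit := intervalIntegral.integral_Iic_add_Ioi (b := 0) hint.integrableOn
    hint.integrableOn
  rw [hIic, hIoi] at hsplit
  rw [Real.fourier_eq, ← hsplit, cauchyPDFReal_def, sub_zero]
  have ha0 : a ≠ 0 := fun h => by simp [h] at ha
  have hb0 : b ≠ 0 := fun h => by simp [h] at hb
  have hsum : b + a = 4 * π * γ := by simp only [a, b]; ring
  have hprod : a * b = 4 * π ^ 2 * (ξ ^ 2 + γ ^ 2) := by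
    simp only [a, b]; ring_nf; rw [I_sq]; ring
  have hπ : (π : ℂ) ≠ 0 := ofReal_ne_zero.2 pi_ne_zero
  rw [div_add_div _ _ ha0 hb0, one_mul, mul_one, hsum, hprod]
  push_cast
  field_simp

lemma integral_cexp_mul_I_div_sq_add_sq {α : ℝ} (hα : 0 < α) (b : ℝ) :
    ∫ t : ℝ, cexp (b * t * I) / ((α ^ 2 + t ^ 2 : ℝ) : ℂ)
      = ((π / α * rexp (-(α * |b|)) : ℝ) : ℂ) := by
  let γ : ℝ≥0 := ⟨α, hα.le⟩
  have hγ : γ ≠ 0 := ne_of_gt hα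
  let g : ℝ → ℂ := fun x => (rexp (-(2 * π * γ * |x|)) : ℂ)
  have hg : Integrable g := (integrable_exp_neg_mul_abs (by positivity)).ofReal
  have hFg : 𝓕 g = fun ξ => (cauchyPDFReal 0 γ ξ : ℂ) :=
    funext (fourier_exp_neg_two_pi_mul_abs hγ)
  have hinv := hg.fourierInv_fourier_eq (hFg ▸ (integrable_cauchyPDFReal 0).ofReal)
    (by fun_prop : Continuous g).continuousAt (v := b / (2 * π))
  rw [hFg, fourierInv_eq'] at hinv
  have hγα : (γ : ℝ) = α := rfl
  have hexp : rexp (-(2 * π * α * |b / (2 * π)|)) = rexp (-(α * |b|)) := by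
    rw [abs_div, abs_of_pos (by positivity : 0 < 2 * π)]
    field_simp
  have harg : ∀ v : ℝ, 2 * π * inner ℝ v (b / (2 * π)) = b * v := fun v => by
    rw [Real.inner_apply]; field_simp
  simp only [g, harg, cauchyPDFReal_def, smul_eq_mul, hγα, sub_zero, hexp] at hinv
  rw [ofReal_mul, ← hinv, ← integral_const_mul]
  refine integral_congr_ae (Eventually.of_forall fun t => ?_)
  have hα' : (α : ℂ) ≠ 0 := ofReal_ne_zero.2 hα.ne'
  push_cast
  field_simp
  ring

lemma integrable_cexp_mul_I_div_sq_add_sq {α : ℝ} (hα : 0 < α) (b : ℝ) :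
    Integrable fun t : ℝ => cexp (b * t * I) / ((α ^ 2 + t ^ 2 : ℝ) : ℂ) := by
  -- a non-integrable function would have Bochner integral `0`
  refine Integrable.of_integral_ne_zero ?_
  rw [integral_cexp_mul_I_div_sq_add_sq hα]
  exact_mod_cast (by positivity : π / α * rexp (-(α * |b|)) ≠ 0)

lemma rpow_neg_half_mul_exp_neg_mul_abs_log_sub_log {α x y : ℝ} (hx : 0 < x) (hy : 0 < y) :
    (x * y) ^ (-(1 / 2) : ℝ) * rexp (-(α * |Real.log y - Real.log x|))
      = (x * y) ^ (α - 1 / 2) / max x y ^ (2 * α) := by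
  wlog hxy : x ≤ y generalizing x y
  · rw [mul_comm x y, max_comm, abs_sub_comm]
    exact this hy hx (le_of_not_ge hxy)
  rw [max_eq_right hxy, abs_of_nonneg (sub_nonneg.2 (Real.log_le_log hx hxy)),
    rpow_def_of_pos (mul_pos hx hy), rpow_def_of_pos (mul_pos hx hy), rpow_def_of_pos hy,
    Real.log_mul hx.ne' hy.ne', ← Real.exp_add, ← Real.exp_sub]
  congr 1
  ring

lemma cpow_mul_conj_cpow {x y : ℝ} (hx : 0 < x) (hy : 0 < y) (t : ℝ) :
    (x : ℂ) ^ (-(1 / 2 : ℂ) - I * t) * conj ((y : ℂ) ^ (-(1 / 2 : ℂ) - I * t))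
      = ((x * y) ^ (-(1 / 2) : ℝ) : ℝ) * cexp ((Real.log y - Real.log x : ℝ) * t * I) := by
  rw [cpow_def_of_ne_zero (ofReal_ne_zero.2 hx.ne'),
    cpow_def_of_ne_zero (ofReal_ne_zero.2 hy.ne'), ← exp_conj, rpow_def_of_pos (mul_pos hx hy),
    Real.log_mul hx.ne' hy.ne', ofReal_exp,
    ← Complex.exp_add, ← Complex.exp_add, ← ofReal_log hx.le, ← ofReal_log hy.le]
  congr 1
  simp only [map_mul, map_sub, map_neg, conj_ofReal, conj_I, map_div₀, map_one, map_ofNat]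
  push_cast
  ring

lemma integral_cpow_mul_conj_cpow_div_sq_add_sq {α : ℝ} (hα : 0 < α) {x y : ℝ} (hx : 0 < x)
    (hy : 0 < y) :
    ∫ t : ℝ, (x : ℂ) ^ (-(1 / 2 : ℂ) - I * t) * conj ((y : ℂ) ^ (-(1 / 2 : ℂ) - I * t))
        / ((α ^ 2 + t ^ 2 : ℝ) : ℂ)
      = ((π / α * ((x * y) ^ (α - 1 / 2) / max x y ^ (2 * α)) : ℝ) : ℂ) := by
  simp_rw [cpow_mul_conj_cpow hx hy, mul_div_assoc]
  rw [integral_const_mul, integral_cexp_mul_I_div_sq_add_sq hα, ← ofReal_mul,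
    ← rpow_neg_half_mul_exp_neg_mul_abs_log_sub_log hx hy]
  ring_nf

lemma integrable_cpow_mul_conj_cpow_div_sq_add_sq {α : ℝ} (hα : 0 < α) {x y : ℝ} (hx : 0 < x)
    (hy : 0 < y) :
    Integrable fun t : ℝ => (x : ℂ) ^ (-(1 / 2 : ℂ) - I * t)
      * conj ((y : ℂ) ^ (-(1 / 2 : ℂ) - I * t)) / ((α ^ 2 + t ^ 2 : ℝ) : ℂ) := by
  refine Integrable.of_integral_ne_zero ?_
  rw [integral_cpow_mul_conj_cpow_div_sq_add_sq hα hx hy]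
  exact_mod_cast (by positivity : π / α * ((x * y) ^ (α - 1 / 2) / max x y ^ (2 * α)) ≠ 0)

lemma integral_norm_sq_sum_cpow_div_sq_add_sq {ι : Type*} (s : Finset ι) (c : ι → ℂ)
    {x : ι → ℝ} (hx : ∀ i, 0 < x i) {α : ℝ} (hα : 0 < α) :
    ((∫ t : ℝ, ‖∑ i ∈ s, c i * (x i : ℂ) ^ (-(1 / 2 : ℂ) - I * t)‖ ^ 2 / (α ^ 2 + t ^ 2)
        : ℝ) : ℂ)
      = π / α * ∑ i ∈ s, ∑ j ∈ s, c i * conj (c j)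
          * (((x i * x j) ^ (α - 1 / 2) / max (x i) (x j) ^ (2 * α) : ℝ) : ℂ) := by
  have expand : ∀ t : ℝ,
      ((‖∑ i ∈ s, c i * (x i : ℂ) ^ (-(1 / 2 : ℂ) - I * t)‖ ^ 2 / (α ^ 2 + t ^ 2) : ℝ) : ℂ)
        = ∑ i ∈ s, ∑ j ∈ s, c i * conj (c j) * ((x i : ℂ) ^ (-(1 / 2 : ℂ) - I * t)
            * conj ((x j : ℂ) ^ (-(1 / 2 : ℂ) - I * t)) / ((α ^ 2 + t ^ 2 : ℝ) : ℂ)) := by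
    intro t
    rw [ofReal_div, ofReal_pow, ← mul_conj', map_sum, Finset.sum_mul_sum, Finset.sum_div]
    refine Finset.sum_congr rfl fun i _ => ?_
    rw [Finset.sum_div]
    refine Finset.sum_congr rfl fun j _ => ?_
    rw [map_mul]
    ring
  have integrable : ∀ i j, Integrable fun t : ℝ => c i * conj (c j)
      * ((x i : ℂ) ^ (-(1 / 2 : ℂ) - I * t) * conj ((x j : ℂ) ^ (-(1 / 2 : ℂ) - I * t))
        / ((α ^ 2 + t ^ 2 : ℝ) : ℂ)) := fun i j =>
    (integrable_cpow_mul_conj_cpow_div_sq_add_sq hα (hx i) (hx j)).const_mul _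
  rw [← integral_complex_ofReal]
  simp_rw [expand]
  rw [integral_finsetSum _ fun i _ => integrable_finsetSum _ fun j _ => integrable i j,
    Finset.mul_sum]
  refine Finset.sum_congr rfl fun i _ => ?_
  rw [integral_finsetSum _ fun j _ => integrable i j, Finset.mul_sum]
  refine Finset.sum_congr rfl fun j _ => ?_
  rw [integral_const_mul, integral_cpow_mul_conj_cpow_div_sq_add_sq hα (hx i) (hx j), ofReal_mul,
    ofReal_div]
  ring

theorem integral_dirichlet_polynomial (α : ℝ) (hα : 0 < α) (a : ℕ+ → ℂ)
    (ha : (Function.support a).Finite) :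
    (((α / Real.pi) *
        ∫ t : ℝ, ‖∑' n : ℕ+, a n * (n : ℂ) ^ (-(1/2 : ℂ) - Complex.I * (t : ℂ))‖ ^ 2
          / (α^2 + t^2) : ℝ) : ℂ)
      = ∑' (m : ℕ+) (n : ℕ+), a m * (starRingEnd ℂ) (a n) *
          ((((m : ℝ) * (n : ℝ)) ^ (α - 1/2) / (max (m : ℝ) (n : ℝ)) ^ (2*α) : ℝ) : ℂ) := by
  set S := ha.toFinset
  have hS : ∀ n ∉ S, a n = 0 := by simp [S]
  have hpoly : ∀ t : ℝ, ∑' n : ℕ+, a n * (n : ℂ) ^ (-(1/2 : ℂ) - Complex.I * (t : ℂ))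
      = ∑ n ∈ S, a n * ((n : ℝ) : ℂ) ^ (-(1/2 : ℂ) - Complex.I * (t : ℂ)) := fun t => by
    rw [tsum_eq_sum fun n hn => by simp [hS n hn]]
    norm_cast
  have hRHS : ∑' (m : ℕ+) (n : ℕ+), a m * (starRingEnd ℂ) (a n) *
        ((((m : ℝ) * (n : ℝ)) ^ (α - 1/2) / (max (m : ℝ) (n : ℝ)) ^ (2*α) : ℝ) : ℂ)
      = ∑ m ∈ S, ∑ n ∈ S, a m * (starRingEnd ℂ) (a n) *
        ((((m : ℝ) * (n : ℝ)) ^ (α - 1/2) / (max (m : ℝ) (n : ℝ)) ^ (2*α) : ℝ) : ℂ) := by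
    rw [tsum_eq_sum (s := S) fun m hm => by simp [hS m hm]]
    exact Finset.sum_congr rfl fun m _ => tsum_eq_sum fun n hn => by simp [hS n hn]
  have hαπ : ((α / π : ℝ) : ℂ) * (π / α) = 1 := by
    have : (α : ℂ) ≠ 0 := ofReal_ne_zero.2 hα.ne'
    push_cast
    field_simp
  simp_rw [hpoly]
  rw [hRHS, ofReal_mul,
    integral_norm_sq_sum_cpow_div_sq_add_sq S a (fun n => by positivity) hα,
    ← mul_assoc, hαπ, one_mul]
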